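/- With S22 invertible, trace(W·S) = trace(W11 S11·2) + trace(S22 (W12 + W11 S12 S22⁻¹)ᵀ W11⁻¹ (W12 + W11 S12 S22⁻¹)) + trace(W22·1 S22), where S11·2 = S11 - S12 S22⁻¹ S21, W22·1 = W22 - W21 W11⁻¹ W12, and W is symmetric (W21 = W12ᵀ, S21 = S12ᵀ). -/
import Mathlib


open Matrix

lemma trace_fromBlocks_aux {p q : Type*} [Fintype p] [Fintype q]
    (A : Matrix p p ℝ) (B : Matrix p q ℝ) (C : Matrix q p ℝ) (D : Matrix q q ℝ) :
    (Matrix.fromBlocks A B C D).trace = A.trace + D.trace := by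
  simp [Matrix.trace, Fintype.sum_sum_type, Matrix.diag, Matrix.fromBlocks]

theorem trace_completion_of_squares
    {p q : Type*} [Fintype p] [Fintype q] [DecidableEq p] [DecidableEq q]
    (W11 S11 : Matrix p p ℝ) (W12 S12 : Matrix p q ℝ) (W22 S22 : Matrix q q ℝ)
    (hW11sym : W11.IsHermitian) (hS22sym : S22.IsHermitian)
    (hW11 : IsUnit W11.det) (hS22 : IsUnit S22.det) :
    (Matrix.fromBlocks W11 W12 W12ᵀ W22 * Matrix.fromBlocks S11 S12 S12ᵀ S22).trace =
      (W11 * (S11 - S12 * S22⁻¹ * S12ᵀ)).trace +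
        (S22 * (W12 + W11 * S12 * S22⁻¹)ᵀ * W11⁻¹ * (W12 + W11 * S12 * S22⁻¹)).trace +
        ((W22 - W12ᵀ * W11⁻¹ * W12) * S22).trace := by
  have hW : W11ᵀ = W11 := by
    have := hW11sym.eq; rwa [Matrix.conjTranspose_eq_transpose_of_trivial] at this
  have hS : S22ᵀ = S22 := by
    have := hS22sym.eq; rwa [Matrix.conjTranspose_eq_transpose_of_trivial] at this
  have hSi : (S22⁻¹)ᵀ = S22⁻¹ := by rw [Matrix.transpose_nonsing_inv, hS]
  rw [Matrix.fromBlocks_multiply, trace_fromBlocks_aux]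
  simp only [transpose_add, transpose_mul, hW, hS, hSi,
    Matrix.mul_add, Matrix.add_mul, Matrix.mul_sub, Matrix.sub_mul,
    Matrix.trace_add, Matrix.trace_sub, Matrix.mul_assoc,
    Matrix.mul_nonsing_inv_cancel_left _ _ hW11,
    Matrix.nonsing_inv_mul_cancel_left _ _ hW11,
    Matrix.mul_nonsing_inv_cancel_left _ _ hS22,
    Matrix.nonsing_inv_mul_cancel_left _ _ hS22]
  rw [Matrix.trace_mul_comm S22 (W12ᵀ * (W11⁻¹ * W12)),
    Matrix.trace_mul_comm S22 (W12ᵀ * (S12 * S22⁻¹)),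
    Matrix.trace_mul_comm S12ᵀ (W11 * (S12 * S22⁻¹)),
    Matrix.trace_mul_comm W12 S12ᵀ]
  simp only [Matrix.mul_assoc, Matrix.nonsing_inv_mul _ hS22, Matrix.mul_one]
  ring
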